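/- arXiv:2407.16474 — 2 statements merged into one kernel-verified Lean document; each statement's English description precedes it below -/
import Mathlib

section
/- Let k, m, i ∈ ℕ with i ≤ k and j ∈ ℤ. Then ∑_{ℓ=0}^{m} C(m,ℓ) · C(k+ℓ, i+m) · j↓(m−ℓ) · (k−j)↓(k+ℓ−i−m) = C(k,i) · (k+m−j)↓(k−i), where any summand with k+ℓ < i+m is taken to be zero (consistently with C(k+ℓ, i+m) = 0 in that case). -/
open MeasureTheory Real Filter

/-- Szász basis function `s_{n,k}(x)` for natural index `k`. -/
noncomputable def szasz (n k : ℕ) (x : ℝ) : ℝ :=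
  Real.exp (-(n : ℝ) * x) * ((n : ℝ) * x) ^ k / (Nat.factorial k)

/-- Szász basis function for integer index, vanishing for negative index. -/
noncomputable def szaszZ (n : ℕ) (k : ℤ) (x : ℝ) : ℝ :=
  if 0 ≤ k then szasz n k.toNat x else 0

/-- The generalized Szász–Mirakjan–Durrmeyer operator `S_{n,j}`. -/
noncomputable def Sop (n : ℕ) (j : ℤ) (f : ℝ → ℝ) (x : ℝ) : ℝ :=
  f 0 * ∑ k ∈ Finset.range j.toNat, szasz n k x
    + ∑' (k : ℕ), szasz n k x *
        ((n : ℝ) * ∫ t in Set.Ioi (0 : ℝ), szaszZ n ((k : ℤ) - j) t * f t)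

/-- Membership in the class `E_A`: locally integrable on `[0,∞)` with exponential growth. -/
def MemE (A : ℝ) (f : ℝ → ℝ) : Prop :=
  MeasureTheory.LocallyIntegrableOn f (Set.Ici 0) ∧
    ∃ K > 0, ∀ t ≥ (0 : ℝ), |f t| ≤ K * Real.exp (A * t)

/-- Falling factorial `a↓r = a(a-1)⋯(a-r+1)` for integer `a`. -/
def ffall (a : ℤ) (r : ℕ) : ℤ := ∏ i ∈ Finset.range r, (a - i)

lemma ffall_zero (a : ℤ) : ffall a 0 = 1 := by simp [ffall]

lemma ffall_succ (a : ℤ) (r : ℕ) : ffall a (r+1) = ffall a r * (a - r) := by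
  simp [ffall, Finset.prod_range_succ]

lemma ffall_add (a : ℤ) (p q : ℕ) : ffall a (p+q) = ffall a p * ffall (a - p) q := by
  rw [ffall, ffall, ffall, Finset.prod_range_add]
  congr 1
  refine Finset.prod_congr rfl fun x _ => ?_
  push_cast; ring

lemma ffall_natCast (n r : ℕ) : ffall (n : ℤ) r = (n.descFactorial r : ℤ) := by
  induction r with
  | zero => simp [ffall_zero]
  | succ r ih =>
    rw [ffall_succ, ih, Nat.descFactorial_succ]
    rcases le_or_gt (r+1) n with h | h
    · push_cast [Nat.cast_sub (by omega : r ≤ n)]; ring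
    · rcases Nat.lt_succ_iff_lt_or_eq.1 h with h' | h'
      · rw [Nat.descFactorial_eq_zero_iff_lt.2 h']; simp
      · subst h'; simp

lemma ffall_natCast_zero {n r : ℕ} (h : n < r) : ffall (n : ℤ) r = 0 := by
  rw [ffall_natCast, Nat.descFactorial_eq_zero_iff_lt.2 h, Nat.cast_zero]

lemma ffall_vandermonde (M : ℕ) (x z : ℤ) :
    ∑ s ∈ Finset.range (M+1), (M.choose s : ℤ) * ffall x (M - s) * ffall z s
      = ffall (x + z) M := by
  induction M with
  | zero => simp [ffall_zero]
  | succ M ih =>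
    set f : ℕ → ℤ := fun s => (((M+1).choose s : ℕ) : ℤ) * ffall x (M+1-s) * ffall z s with hf
    set g : ℕ → ℤ := fun s => ((M.choose s : ℕ) : ℤ) * ffall x (M+1-s) * ffall z s with hg
    have hS2 : ∑ s ∈ Finset.range (M+1), g (s+1)
        = ∑ s ∈ Finset.range (M+1), g s - ffall x (M+1) := by
      have h1 := Finset.sum_range_succ' g (M+1)
      have h2 := Finset.sum_range_succ g (M+1)
      have hg0 : g 0 = ffall x (M+1) := by simp [hg, ffall_zero]
      have hgM : g (M+1) = 0 := by
        simp [hg, Nat.choose_succ_self]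
      rw [h2, hgM] at h1
      rw [hg0] at h1
      linarith
    have split : ∀ s ∈ Finset.range (M+1),
        f (s+1) = (M.choose s : ℤ) * ffall x (M-s) * ffall z (s+1) + g (s+1) := by
      intro s hs
      simp only [hf, hg, Nat.choose_succ_succ, Nat.succ_sub_succ]
      push_cast
      ring
    calc ∑ s ∈ Finset.range (M+1+1), f s
        = ∑ s ∈ Finset.range (M+1), f (s+1) + f 0 := Finset.sum_range_succ' f (M+1)
      _ = (∑ s ∈ Finset.range (M+1), ((M.choose s : ℤ) * ffall x (M-s) * ffall z (s+1) + g (s+1)))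
            + ffall x (M+1) := by
          rw [Finset.sum_congr rfl split]; simp [hf, ffall_zero]
      _ = ∑ s ∈ Finset.range (M+1), (M.choose s : ℤ) * ffall x (M-s) * ffall z (s+1)
            + ∑ s ∈ Finset.range (M+1), g s := by
          rw [Finset.sum_add_distrib, hS2]; ring
      _ = ∑ s ∈ Finset.range (M+1),
            ((M.choose s : ℤ) * ffall x (M-s) * ffall z s) * (x + z - M) := by
          rw [← Finset.sum_add_distrib]
          refine Finset.sum_congr rfl fun s hs => ?_
          have hsM : s ≤ M := by simpa [Nat.lt_succ_iff] using hs
          have e1 : M + 1 - s = (M - s) + 1 := by omega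
          simp only [hg, e1, ffall_succ]
          have e2 : ((M - s : ℕ) : ℤ) = (M : ℤ) - s := by
            push_cast [Nat.cast_sub hsM]; ring
          rw [e2]
          ring
      _ = ffall (x+z) M * (x + z - M) := by rw [← Finset.sum_mul, ih]
      _ = ffall (x+z) (M+1) := (ffall_succ _ _).symm

lemma choose_swap (m n s : ℕ) :
    (m.choose s : ℤ) * ffall (n : ℤ) s = (n.choose s : ℤ) * ffall (m : ℤ) s := by
  rw [ffall_natCast, ffall_natCast]
  norm_cast
  rw [Nat.descFactorial_eq_factorial_mul_choose, Nat.descFactorial_eq_factorial_mul_choose]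
  ring


lemma ffall_key (m n : ℕ) (y : ℤ) :
    ∑ s ∈ Finset.range (m+1), (m.choose s : ℤ) * ffall (n : ℤ) s * ffall y (n - s)
      = ffall ((m : ℤ) + y) n := by
  have h1 : ∀ s ∈ Finset.range (m+1), (m.choose s : ℤ) * ffall (n : ℤ) s * ffall y (n-s)
      = (n.choose s : ℤ) * ffall y (n-s) * ffall (m : ℤ) s := by
    intro s _
    have := choose_swap m n s
    linear_combination ffall y (n-s) * this
  rw [Finset.sum_congr rfl h1]
  set h : ℕ → ℤ := fun s => (n.choose s : ℤ) * ffall y (n-s) * ffall (m : ℤ) s with hh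
  have e1 : ∑ s ∈ Finset.range (m+1), h s = ∑ s ∈ Finset.range (max m n + 1), h s := by
    apply Finset.sum_subset (Finset.range_subset_range.2 (by omega))
    intro s _ hs
    have : m < s := by simp only [Finset.mem_range] at hs; omega
    simp [hh, ffall_natCast_zero this]
  have e2 : ∑ s ∈ Finset.range (n+1), h s = ∑ s ∈ Finset.range (max m n + 1), h s := by
    apply Finset.sum_subset (Finset.range_subset_range.2 (by omega))
    intro s _ hs
    have : n < s := by simp only [Finset.mem_range] at hs; omega
    simp [hh, Nat.choose_eq_zero_of_lt this]
  rw [e1, ← e2, hh, ffall_vandermonde n y (m : ℤ), add_comm]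

lemma tri {n a b : ℕ} (hba : b ≤ a) (han : a ≤ n) :
    n.choose a * a.choose b = n.choose b * (n-b).choose (a-b) := by
  apply Nat.eq_of_mul_eq_mul_right
    (show 0 < b.factorial * (a-b).factorial * (n-a).factorial by positivity)
  have h1 := Nat.choose_mul_factorial_mul_factorial hba
  have h2 := Nat.choose_mul_factorial_mul_factorial han
  have h3 := Nat.choose_mul_factorial_mul_factorial (show a-b ≤ n-b by omega)
  have h4 := Nat.choose_mul_factorial_mul_factorial (show b ≤ n by omega)
  have e1 : (n-b) - (a-b) = n - a := by omega
  rw [e1] at h3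
  calc n.choose a * a.choose b * (b.factorial * (a-b).factorial * (n-a).factorial)
      = (a.choose b * b.factorial * (a-b).factorial) * n.choose a * (n-a).factorial := by ring
    _ = n.choose a * a.factorial * (n-a).factorial := by rw [h1]; ring
    _ = n.factorial := h2
    _ = n.choose b * b.factorial * (n-b).factorial := h4.symm
    _ = ((n-b).choose (a-b) * (a-b).factorial * (n-a).factorial) * (n.choose b * b.factorial) := by
        rw [h3]; ring
    _ = n.choose b * (n-b).choose (a-b) * (b.factorial * (a-b).factorial * (n-a).factorial) := by
        ring

lemma dfl {k i m t : ℕ} (hik : i ≤ k) (htm : t ≤ m) (h : i + m ≤ k + t) :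
    k.choose (i+m-t) * (i+m-t).descFactorial (m-t)
      = k.choose i * (k-i).descFactorial (m-t) := by
  rw [Nat.descFactorial_eq_factorial_mul_choose, Nat.descFactorial_eq_factorial_mul_choose]
  have hsym : (i+m-t).choose (m-t) = (i+m-t).choose i := by
    rw [← Nat.choose_symm (show m-t ≤ i+m-t by omega)]
    congr 1; omega
  have htri := tri (show i ≤ i+m-t by omega) (show i+m-t ≤ k by omega)
  have e : i+m-t-i = m-t := by omega
  rw [e] at htri
  calc k.choose (i+m-t) * ((m-t).factorial * (i+m-t).choose (m-t))
      = (k.choose (i+m-t) * (i+m-t).choose i) * (m-t).factorial := by rw [hsym]; ring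
    _ = (k.choose i * (k-i).choose (m-t)) * (m-t).factorial := by rw [htri]
    _ = k.choose i * ((m-t).factorial * (k-i).choose (m-t)) := by ring

lemma innerSum18 (k m i t : ℕ) (hik : i ≤ k) (htm : t ≤ m) (j : ℤ) :
    ∑ ℓ ∈ Finset.range (m+1),
      (m.choose ℓ : ℤ) * ((k.choose (i+m-t) : ℤ) * (ℓ.choose t : ℤ)) * ffall j (m-ℓ)
        * ffall ((k:ℤ)-j) (k+ℓ-i-m)
    = (k.choose i : ℤ) * (m.choose t : ℤ) * ffall ((k-i : ℕ) : ℤ) (m-t)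
        * ffall ((k:ℤ)-j) (k+t-i-m) := by
  rcases lt_or_ge (k+t) (i+m) with hlt | hge
  · have hc : k.choose (i+m-t) = 0 := Nat.choose_eq_zero_of_lt (by omega)
    have hz : ffall ((k-i:ℕ):ℤ) (m-t) = 0 := ffall_natCast_zero (by omega)
    simp [hc, hz]
  · have hsplit : m + 1 = t + (m - t + 1) := by omega
    rw [hsplit, Finset.sum_range_add]
    have hzero : ∑ ℓ ∈ Finset.range t,
        (m.choose ℓ : ℤ) * ((k.choose (i+m-t) : ℤ) * (ℓ.choose t : ℤ)) * ffall j (m-ℓ)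
          * ffall ((k:ℤ)-j) (k+ℓ-i-m) = 0 := by
      refine Finset.sum_eq_zero fun ℓ hℓ => ?_
      have : ℓ < t := Finset.mem_range.1 hℓ
      simp [Nat.choose_eq_zero_of_lt this]
    rw [hzero, zero_add]
    have hterm : ∀ s ∈ Finset.range (m - t + 1),
        (m.choose (t+s) : ℤ) * ((k.choose (i+m-t) : ℤ) * ((t+s).choose t : ℤ))
            * ffall j (m-(t+s)) * ffall ((k:ℤ)-j) (k+(t+s)-i-m)
        = ((k.choose (i+m-t) : ℤ) * (m.choose t : ℤ) * ffall ((k:ℤ)-j) (k+t-i-m))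
            * (((m-t).choose s : ℤ) * ffall j ((m-t)-s) * ffall (((i+m-t:ℕ):ℤ) - j) s) := by
      intro s hs
      have hs' : s ≤ m - t := by have := Finset.mem_range.1 hs; omega
      have e1 : m - (t+s) = (m-t) - s := by omega
      have e2 : k + (t+s) - i - m = (k+t-i-m) + s := by omega
      have e3 : (k:ℤ) - j - ((k+t-i-m : ℕ) : ℤ) = ((i+m-t:ℕ):ℤ) - j := by
        have : ((k+t-i-m : ℕ) : ℤ) = (k:ℤ) + t - i - m := by omega
        have h2 : ((i+m-t : ℕ) : ℤ) = (i:ℤ) + m - t := by omega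
        rw [this, h2]; ring
      have htri : (m.choose (t+s) : ℤ) * ((t+s).choose t : ℤ)
          = (m.choose t : ℤ) * ((m-t).choose s : ℤ) := by
        have h0 := tri (show t ≤ t+s by omega) (show t+s ≤ m by omega)
        have h1 : t + s - t = s := by omega
        rw [h1] at h0
        exact_mod_cast congrArg (Nat.cast (R := ℤ)) h0
      rw [e1, e2, ffall_add, e3]
      linear_combination (ffall j ((m-t)-s) * ffall (((i+m-t:ℕ):ℤ) - j) s
        * ffall ((k:ℤ)-j) (k+t-i-m) * (k.choose (i+m-t) : ℤ)) * htri
    rw [Finset.sum_congr rfl hterm, ← Finset.mul_sum, ffall_vandermonde (m-t) j,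
      show j + (((i+m-t:ℕ):ℤ) - j) = ((i+m-t:ℕ):ℤ) from by ring]
    have hdf : (k.choose (i+m-t) : ℤ) * ffall ((i+m-t:ℕ):ℤ) (m-t)
        = (k.choose i : ℤ) * ffall ((k-i:ℕ):ℤ) (m-t) := by
      rw [ffall_natCast, ffall_natCast]
      exact_mod_cast congrArg (Nat.cast (R := ℤ)) (dfl hik htm hge)
    linear_combination ((m.choose t : ℤ) * ffall ((k:ℤ)-j) (k+t-i-m)) * hdf

/-- the combinatorial identity `d(k,j,m,i+m) = C(k,i)·(k+m-j)↓(k-i)`. -/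
theorem stmt_18 (k m i : ℕ) (hik : i ≤ k) (j : ℤ) :
    ∑ ℓ ∈ Finset.range (m + 1),
      (m.choose ℓ : ℤ) * ((k + ℓ).choose (i + m) : ℤ) * ffall j (m - ℓ) *
        ffall ((k : ℤ) - j) (k + ℓ - i - m) =
      (k.choose i : ℤ) * ffall ((k : ℤ) + m - j) (k - i) := by
  have expand : ∀ ℓ ∈ Finset.range (m+1),
      (m.choose ℓ : ℤ) * ((k + ℓ).choose (i + m) : ℤ) * ffall j (m - ℓ) *
        ffall ((k : ℤ) - j) (k + ℓ - i - m)
      = ∑ t ∈ Finset.range (m+1),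
          (m.choose ℓ : ℤ) * ((k.choose (i+m-t) : ℤ) * (ℓ.choose t : ℤ)) * ffall j (m-ℓ)
            * ffall ((k:ℤ)-j) (k+ℓ-i-m) := by
    intro ℓ hℓ
    have hℓm : ℓ ≤ m := by have := Finset.mem_range.1 hℓ; omega
    have hch : ((k+ℓ).choose (i+m) : ℤ)
        = ∑ t ∈ Finset.range (m+1), (k.choose (i+m-t) : ℤ) * (ℓ.choose t : ℤ) := by
      have h0 := Nat.add_choose_eq ℓ k (i+m)
      rw [Finset.Nat.sum_antidiagonal_eq_sum_range_succ_mk] at h0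
      have h1 : ∑ t ∈ Finset.range (m+1), ℓ.choose t * k.choose (i+m-t)
          = ∑ t ∈ Finset.range (i+m+1), ℓ.choose t * k.choose (i+m-t) := by
        refine Finset.sum_subset (Finset.range_subset_range.2 (by omega)) fun t _ ht => ?_
        have : ℓ < t := by have := Finset.mem_range.1 ‹t ∈ Finset.range (i+m+1)›; simp only [Finset.mem_range] at ht; omega
        simp [Nat.choose_eq_zero_of_lt this]
      rw [add_comm k ℓ, h0, ← h1]
      push_cast
      exact Finset.sum_congr rfl fun t _ => by ring
    rw [hch, Finset.mul_sum, Finset.sum_mul, Finset.sum_mul]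
  rw [Finset.sum_congr rfl expand, Finset.sum_comm]
  have h2 : ∀ t ∈ Finset.range (m+1),
      (∑ ℓ ∈ Finset.range (m+1),
        (m.choose ℓ : ℤ) * ((k.choose (i+m-t) : ℤ) * (ℓ.choose t : ℤ)) * ffall j (m-ℓ)
          * ffall ((k:ℤ)-j) (k+ℓ-i-m))
      = (k.choose i : ℤ) * ((m.choose t : ℤ) * ffall ((k-i : ℕ) : ℤ) (m-t)
          * ffall ((k:ℤ)-j) (k+t-i-m)) := by
    intro t ht
    rw [innerSum18 k m i t hik (by have := Finset.mem_range.1 ht; omega) j]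
    ring
  rw [Finset.sum_congr rfl h2, ← Finset.mul_sum]
  congr 1
  have hrefl := (Finset.sum_range_reflect (fun t =>
      (m.choose t : ℤ) * ffall ((k-i : ℕ) : ℤ) (m-t) * ffall ((k:ℤ)-j) (k+t-i-m)) (m+1)).symm
  calc ∑ t ∈ Finset.range (m+1), (m.choose t : ℤ) * ffall ((k-i:ℕ):ℤ) (m-t)
          * ffall ((k:ℤ)-j) (k+t-i-m)
      = ∑ t ∈ Finset.range (m+1), (m.choose t : ℤ) * ffall ((k-i:ℕ):ℤ) t
          * ffall ((k:ℤ)-j) ((k-i)-t) := by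
        rw [hrefl]
        refine Finset.sum_congr rfl fun t ht => ?_
        have htm : t ≤ m := by have := Finset.mem_range.1 ht; omega
        have e1 : m + 1 - 1 - t = m - t := by omega
        have e2 : m - (m - t) = t := by omega
        have e3 : k + (m-t) - i - m = (k-i) - t := by omega
        rw [e1, e2, e3, Nat.choose_symm htm]
    _ = ffall ((m:ℤ) + ((k:ℤ)-j)) (k-i) := ffall_key m (k-i) ((k:ℤ)-j)
    _ = ffall ((k:ℤ) + m - j) (k-i) := by ring_nf
end

section
/- Let j ∈ ℤ, k ∈ ℕ and x > 0, and let f be a real function of class C^{2k} on a neighborhood of x. Then ∑_{s=0}^{k} (f^{(k+s)}(x)/s!) · ((k−j)↓(k−s)/(k−s)!) · x^s = (x^j/k!) · D^k( x^{k-j} f^{(k)}(x) ), i.e. the k-th derivative at x of the function t ↦ t^{k-j} f^{(k)}(t), multiplied by x^j/k!, equals the stated sum. -/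
open MeasureTheory Real Filter

open Topology


private lemma iDW_open {f : ℝ → ℝ} {s : Set ℝ} {x : ℝ} (n : ℕ) (hs : IsOpen s) (hx : x ∈ s) :
    iteratedDerivWithin n f s x = iteratedDeriv n f x := by
  rw [iteratedDerivWithin_eq_iteratedFDerivWithin, iteratedDeriv_eq_iteratedFDeriv,
    iteratedFDerivWithin_of_isOpen n hs hx]

private lemma iD_add {s : Set ℝ} (hs : IsOpen s) {n : ℕ} {f g : ℝ → ℝ}
    (hf : ContDiffOn ℝ n f s) (hg : ContDiffOn ℝ n g s) {x : ℝ} (hx : x ∈ s) :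
    iteratedDeriv n (fun t => f t + g t) x = iteratedDeriv n f x + iteratedDeriv n g x := by
  have h := iteratedDerivWithin_add hx hs.uniqueDiffOn (hf x hx) (hg x hx)
  rw [iDW_open n hs hx, iDW_open n hs hx, iDW_open n hs hx] at h
  exact h

private lemma iD_iD (k : ℕ) : ∀ (m : ℕ) (f : ℝ → ℝ),
    iteratedDeriv (m + k) f = iteratedDeriv m (iteratedDeriv k f) := by
  intro m
  induction m with
  | zero => intro f; simp [iteratedDeriv_zero]
  | succ m ih =>
    intro f
    rw [Nat.succ_add, iteratedDeriv_succ, iteratedDeriv_succ, ih]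

private lemma cdo_iD {s : Set ℝ} (hs : IsOpen s) :
    ∀ (n m : ℕ) (f : ℝ → ℝ), ContDiffOn ℝ (m + n : ℕ) f s →
      ContDiffOn ℝ m (iteratedDeriv n f) s := by
  intro n
  induction n with
  | zero => intro m f h; simpa using h
  | succ n ih =>
    intro m f h
    rw [iteratedDeriv_succ']
    refine ih m (deriv f) (h.deriv_of_isOpen hs ?_)
    norm_cast


private lemma contDiffOn_zpow_Ioi (m : ℤ) (n : ℕ) :
    ContDiffOn ℝ n (fun t : ℝ => t ^ m) (Set.Ioi (0:ℝ)) := by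
  have h1 : ContDiffOn ℝ n (fun t : ℝ => t ^ m.toNat * (t ^ (-m).toNat)⁻¹) (Set.Ioi (0:ℝ)) := by
    exact ((contDiff_id.pow m.toNat).contDiffOn).mul
      (((contDiff_id.pow (-m).toNat).contDiffOn).inv
        (fun t ht => pow_ne_zero _ (ne_of_gt ht)))
  refine h1.congr fun t ht => ?_
  rw [← zpow_natCast t m.toNat, ← zpow_natCast t (-m).toNat, ← zpow_neg,
    ← zpow_add₀ (ne_of_gt (Set.mem_Ioi.mp ht))]
  congr 1
  omega

private lemma pascal_sum (n : ℕ) (F : ℕ → ℕ → ℝ) :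
    ∑ i ∈ Finset.range (n+1), (n.choose i : ℝ) * F (i+1) (n-i)
      + ∑ i ∈ Finset.range (n+1), (n.choose i : ℝ) * F i (n+1-i)
    = ∑ i ∈ Finset.range (n+2), ((n+1).choose i : ℝ) * F i (n+1-i) := by
  rw [Finset.sum_range_succ' (fun i => ((n+1).choose i : ℝ) * F i (n+1-i)) (n+1),
    Finset.sum_range_succ' (fun i => (n.choose i : ℝ) * F i (n+1-i)) n]
  simp only [Nat.succ_sub_succ, Nat.choose_zero_right, Nat.cast_one, one_mul, Nat.sub_zero,
    Nat.choose_succ_succ, Nat.cast_add, add_mul]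
  rw [Finset.sum_add_distrib]
  have h : ∑ i ∈ Finset.range (n+1), (n.choose (i+1) : ℝ) * F (i+1) (n-i)
      = ∑ i ∈ Finset.range n, (n.choose (i+1) : ℝ) * F (i+1) (n-i) := by
    rw [Finset.sum_range_succ, Nat.choose_succ_self]
    simp
  rw [← h]
  ring

private lemma leibniz {s : Set ℝ} (hs : IsOpen s) :
    ∀ (n : ℕ) (f g : ℝ → ℝ), ContDiffOn ℝ n f s → ContDiffOn ℝ n g s → ∀ x ∈ s,
      iteratedDeriv n (fun t => f t * g t) x =
        ∑ i ∈ Finset.range (n + 1),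
          (n.choose i : ℝ) * iteratedDeriv i f x * iteratedDeriv (n - i) g x := by
  intro n
  induction n with
  | zero => intro f g _ _ x _; simp
  | succ n ih =>
    intro f g hf hg x hx
    have h1 : (1 : WithTop ℕ∞) ≤ ((n+1 : ℕ) : WithTop ℕ∞) := by norm_cast; omega
    have hle : ((n : WithTop ℕ∞)) ≤ ((n+1 : ℕ) : WithTop ℕ∞) := by norm_cast; omega
    have hfd : DifferentiableOn ℝ f s := hf.differentiableOn (by exact_mod_cast Nat.succ_ne_zero n)
    have hgd : DifferentiableOn ℝ g s := hg.differentiableOn (by exact_mod_cast Nat.succ_ne_zero n)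
    have hf' : ContDiffOn ℝ n (deriv f) s := hf.deriv_of_isOpen hs (by norm_cast)
    have hg' : ContDiffOn ℝ n (deriv g) s := hg.deriv_of_isOpen hs (by norm_cast)
    have hfn : ContDiffOn ℝ n f s := hf.of_le hle
    have hgn : ContDiffOn ℝ n g s := hg.of_le hle
    have key : iteratedDeriv (n+1) (fun t => f t * g t) x
        = iteratedDeriv n (fun t => deriv f t * g t + f t * deriv g t) x := by
      rw [iteratedDeriv_succ']
      apply Filter.EventuallyEq.iteratedDeriv_eq
      filter_upwards [hs.mem_nhds hx] with y hy
      exact deriv_mul ((hfd y hy).differentiableAt (hs.mem_nhds hy))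
        ((hgd y hy).differentiableAt (hs.mem_nhds hy))
    rw [key, iD_add hs (hf'.mul hgn) (hfn.mul hg') hx, ih _ _ hf' hgn x hx,
      ih _ _ hfn hg' x hx]
    have e1 : ∀ i, iteratedDeriv i (deriv f) x = iteratedDeriv (i+1) f x := by
      intro i; rw [iteratedDeriv_succ']
    have e2 : ∀ i ∈ Finset.range (n+1),
        (n.choose i : ℝ) * iteratedDeriv i f x * iteratedDeriv (n-i) (deriv g) x
          = (n.choose i : ℝ) * (iteratedDeriv i f x * iteratedDeriv (n+1-i) g x) := by
      intro i hi
      rw [show n+1-i = (n-i)+1 from by have := Finset.mem_range.mp hi; omega,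
        iteratedDeriv_succ']
      ring
    have e1' : ∀ i ∈ Finset.range (n+1),
        (n.choose i : ℝ) * iteratedDeriv i (deriv f) x * iteratedDeriv (n-i) g x
          = (n.choose i : ℝ) * (iteratedDeriv (i+1) f x * iteratedDeriv (n-i) g x) := by
      intro i _; rw [e1]; ring
    rw [Finset.sum_congr rfl e1', Finset.sum_congr rfl e2,
      pascal_sum n (fun a b => iteratedDeriv a f x * iteratedDeriv b g x)]
    exact Finset.sum_congr rfl fun i _ => by ring

/-- closed form of the expansion coefficients by the Leibniz rule. -/
theorem stmt_19 (j : ℤ) (k : ℕ) (x : ℝ) (hx : 0 < x) (f : ℝ → ℝ)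
    (hf : ∃ U ∈ nhds x, ContDiffOn ℝ (2 * k : ℕ) f U) :
    ∑ s ∈ Finset.range (k + 1),
      (iteratedDeriv (k + s) f x / (Nat.factorial s)) *
        ((ffall ((k : ℤ) - j) (k - s) : ℝ) / (Nat.factorial (k - s))) * x ^ s =
      (x ^ j / (Nat.factorial k)) *
        iteratedDeriv k (fun t => t ^ ((k : ℤ) - j) * iteratedDeriv k f t) x := by
  obtain ⟨U, hU, hfU⟩ := hf
  obtain ⟨V, hVU, hVopen, hxV⟩ := mem_nhds_iff.mp hU
  set m : ℤ := (k : ℤ) - j with hm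
  set W : Set ℝ := V ∩ Set.Ioi 0 with hWdef
  have hWopen : IsOpen W := hVopen.inter isOpen_Ioi
  have hxW : x ∈ W := ⟨hxV, hx⟩
  have hfW : ContDiffOn ℝ (k + k : ℕ) f W := by
    have h2 : ContDiffOn ℝ (2 * k : ℕ) f W :=
      hfU.mono (Set.inter_subset_left.trans hVU)
    have : (k + k) = 2 * k := by omega
    rw [this]; exact h2
  have hgW : ContDiffOn ℝ (k : ℕ) (fun t : ℝ => t ^ m) W :=
    (contDiffOn_zpow_Ioi m k).mono Set.inter_subset_right
  have hhW : ContDiffOn ℝ (k : ℕ) (iteratedDeriv k f) W := cdo_iD hWopen k k f hfW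
  rw [leibniz hWopen k _ _ hgW hhW x hxW, ← Finset.sum_range_reflect, Finset.mul_sum]
  refine Finset.sum_congr rfl fun s hs => ?_
  have hsk : s ≤ k := by
    have := Finset.mem_range.mp hs; omega
  have hidx : k + 1 - 1 - s = k - s := by omega
  rw [hidx]
  have hg : iteratedDeriv s (fun t : ℝ => t ^ m) x
      = (∏ i ∈ Finset.range s, ((m : ℝ) - i)) * x ^ (m - (s : ℕ)) := by
    rw [iteratedDeriv_eq_iterate]; exact iter_deriv_zpow m x s
  have hidx2 : k - (k - s) = s := by omega
  have hh : iteratedDeriv (k - s) (iteratedDeriv k f) x = iteratedDeriv (k + (k - s)) f x := by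
    rw [← iD_iD k (k - s) f, Nat.add_comm]
  rw [hidx2, hg, hh]
  have hc : ((ffall m s : ℤ) : ℝ) = ∏ i ∈ Finset.range s, ((m : ℝ) - i) := by
    unfold ffall; push_cast; rfl
  have hz : m - (s : ℤ) = ((k - s : ℕ) : ℤ) - j := by omega
  have hx' : x ≠ 0 := ne_of_gt hx
  have hzz : x ^ (m - (s : ℕ) : ℤ) = x ^ (k - s) * (x ^ j)⁻¹ := by
    rw [hz, zpow_sub₀ hx', zpow_natCast, div_eq_mul_inv]
  have hfac : (Nat.factorial k : ℝ)
      = (k.choose s : ℝ) * (Nat.factorial s) * (Nat.factorial (k - s)) := by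
    exact_mod_cast (Nat.choose_mul_factorial_mul_factorial hsk).symm
  rw [hc, hzz, hfac]
  have hyj : (x : ℝ) ^ j ≠ 0 := zpow_ne_zero _ hx'
  have h1 : (Nat.factorial s : ℝ) ≠ 0 := Nat.cast_ne_zero.mpr (Nat.factorial_ne_zero s)
  have h2 : (Nat.factorial (k - s) : ℝ) ≠ 0 := Nat.cast_ne_zero.mpr (Nat.factorial_ne_zero _)
  have h3 : (k.choose s : ℝ) ≠ 0 := Nat.cast_ne_zero.mpr (Nat.choose_pos hsk).ne'
  field_simp
end
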